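/- arXiv:1606.01028 — 2 statements merged into one kernel-verified Lean document; each statement's English description precedes it below -/
import Mathlib

section
/- Under mutual absolute continuity (all a_{ij} > 0), the maxmin allocation X* ∈ argmax_X min_i a_i(X) is equitable: a_1(X*) = a_2(X*) = a_3(X*). -/
/-!
If some player `k` is strictly better off than the minimum, `k` holds a positive share of some
good `j`. Moving a small amount `2ε` of `j` from `k` to the other two players, `ε` each, keeps
`k` above the old minimum while strictly raising the others' payoffs, because they value `j`
positively. The minimum payoff then strictly increases, contradicting maximality.
-/

/-- An allocation matrix: nonnegative entries, columns summing to 1. -/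
def IsAlloc {m : ℕ} (X : Fin 3 → Fin m → ℝ) : Prop :=
  (∀ i j, 0 ≤ X i j) ∧ ∀ j, ∑ i, X i j = 1

/-- Value vector of an allocation. -/
def payoff {m : ℕ} (a X : Fin 3 → Fin m → ℝ) : Fin 3 → ℝ :=
  fun i => ∑ j, a i j * X i j

variable {m : ℕ}

def minPayoff (a X : Fin 3 → Fin m → ℝ) : ℝ :=
  min (min (payoff a X 0) (payoff a X 1)) (payoff a X 2)

theorem minPayoff_le_payoff (a X : Fin 3 → Fin m → ℝ) (i : Fin 3) :
    minPayoff a X ≤ payoff a X i := by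
  fin_cases i <;> simp [minPayoff]

theorem lt_minPayoff_iff {a X : Fin 3 → Fin m → ℝ} {c : ℝ} :
    c < minPayoff a X ↔ ∀ i, c < payoff a X i := by
  simp [minPayoff, Fin.forall_fin_succ, and_assoc]

theorem payoff_nonneg {a X : Fin 3 → Fin m → ℝ} (ha : ∀ i j, 0 ≤ a i j) (hX : IsAlloc X)
    (i : Fin 3) : 0 ≤ payoff a X i :=
  Finset.sum_nonneg fun j _ => mul_nonneg (ha i j) (hX.1 i j)

theorem exists_pos_of_payoff_pos {a X : Fin 3 → Fin m → ℝ} (ha : ∀ i j, 0 ≤ a i j) {k : Fin 3}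
    (hk : 0 < payoff a X k) : ∃ j, 0 < X k j := by
  obtain ⟨j, -, hj⟩ := Finset.exists_lt_of_sum_lt (f := fun _ => (0 : ℝ))
    (by simpa [payoff] using hk)
  exact ⟨j, pos_of_mul_pos_right hj (ha k j)⟩

def shift (k : Fin 3) (ε : ℝ) : Fin 3 → ℝ :=
  fun i => if i = k then -(2 * ε) else ε

theorem sum_shift (k : Fin 3) (ε : ℝ) : ∑ i, shift k ε i = 0 := by
  rw [Fin.sum_univ_three]
  fin_cases k <;> simp [shift] <;> ring

def transfer (X : Fin 3 → Fin m → ℝ) (k : Fin 3) (j : Fin m) (ε : ℝ) : Fin 3 → Fin m → ℝ :=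
  fun i j' => X i j' + if j' = j then shift k ε i else 0

theorem isAlloc_transfer {X : Fin 3 → Fin m → ℝ} (hX : IsAlloc X) {k : Fin 3} {j : Fin m}
    {ε : ℝ} (hε : 0 ≤ ε) (hεX : 2 * ε ≤ X k j) : IsAlloc (transfer X k j ε) := by
  refine ⟨fun i j' => ?_, fun j' => ?_⟩
  · have := hX.1 i j'
    unfold transfer shift
    split_ifs with hj hi
    · subst hj hi; linarith
    all_goals linarith
  · simp only [transfer, Finset.sum_add_distrib, hX.2 j']
    split_ifs <;> simp [sum_shift]

theorem payoff_transfer (a X : Fin 3 → Fin m → ℝ) (k : Fin 3) (j : Fin m) (ε : ℝ) (i : Fin 3) :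
    payoff a (transfer X k j ε) i = payoff a X i + a i j * shift k ε i := by
  simp [payoff, transfer, mul_add, Finset.sum_add_distrib, mul_ite]

theorem payoff_le_minPayoff_of_maxmin {a Xs : Fin 3 → Fin m → ℝ} (ha : ∀ i j, 0 < a i j)
    (hXs : IsAlloc Xs) (hmax : ∀ X, IsAlloc X → minPayoff a X ≤ minPayoff a Xs) (k : Fin 3) :
    payoff a Xs k ≤ minPayoff a Xs := by
  set v := minPayoff a Xs
  by_contra! hvk
  have hv : 0 ≤ v := by
    have h := payoff_nonneg (fun i j => (ha i j).le) hXs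
    exact le_min (le_min (h 0) (h 1)) (h 2)
  obtain ⟨j, hj⟩ := exists_pos_of_payoff_pos (fun i j => (ha i j).le) (hv.trans_lt hvk)
  obtain ⟨δ, hδ, hδk⟩ := exists_pos_mul_lt (sub_pos.2 hvk) (2 * a k j)
  set ε := min δ (Xs k j / 2)
  have hε : 0 < ε := lt_min hδ (half_pos hj)
  have hεX : 2 * ε ≤ Xs k j := by linarith [min_le_right δ (Xs k j / 2)]
  refine (hmax _ (isAlloc_transfer hXs hε.le hεX)).not_gt (lt_minPayoff_iff.2 fun i => ?_)
  rw [payoff_transfer]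
  by_cases hi : i = k
  · subst hi
    have : 2 * a i j * ε ≤ 2 * a i j * δ :=
      mul_le_mul_of_nonneg_left (min_le_left _ _) (by linarith [ha i j])
    simp only [shift, if_true]
    linarith
  · simp only [shift, if_neg hi]
    linarith [minPayoff_le_payoff a Xs i, mul_pos (ha i j) hε]

theorem maxmin_is_equitable_general (m : ℕ) (a : Fin 3 → Fin m → ℝ)
    (ha : ∀ i j, 0 < a i j)
    (Xs : Fin 3 → Fin m → ℝ) (hXs : IsAlloc Xs)
    (hmax : ∀ X : Fin 3 → Fin m → ℝ, IsAlloc X →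
      min (min (payoff a X 0) (payoff a X 1)) (payoff a X 2) ≤
        min (min (payoff a Xs 0) (payoff a Xs 1)) (payoff a Xs 2)) :
    payoff a Xs 0 = payoff a Xs 1 ∧ payoff a Xs 1 = payoff a Xs 2 := by
  have equal_min : ∀ i, payoff a Xs i = minPayoff a Xs := fun i =>
    (payoff_le_minPayoff_of_maxmin ha hXs hmax i).antisymm (minPayoff_le_payoff a Xs i)
  exact ⟨(equal_min 0).trans (equal_min 1).symm, (equal_min 1).trans (equal_min 2).symm⟩

theorem maxmin_is_equitable (m : ℕ) (a : Fin 3 → Fin m → ℝ)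
    (ha : ∀ i j, 0 < a i j) (hrow : ∀ i, ∑ j, a i j = 1)
    (Xs : Fin 3 → Fin m → ℝ) (hXs : IsAlloc Xs)
    (hmax : ∀ X : Fin 3 → Fin m → ℝ, IsAlloc X →
      min (min (payoff a X 0) (payoff a X 1)) (payoff a X 2) ≤
        min (min (payoff a Xs 0) (payoff a Xs 1)) (payoff a Xs 2)) :
    payoff a Xs 0 = payoff a Xs 1 ∧ payoff a Xs 1 = payoff a Xs 2 :=
  maxmin_is_equitable_general m a ha Xs hXs hmax
end

section
/- For γ in the open 2-simplex, the hyperplane H(γ) = {x ∈ ℝ³ : ∑_i γ_i x_i = g(γ)}, where g(γ) = ∑_i γ_i a_i(X^γ) and X^γ is an allocation satisfying x_{ik} > 0 ⟹ γ_i a_{ik} ≥ γ_j a_{jk}, supports IPS at a(X^γ): that is, ∑_i γ_i y_i ≤ g(γ) for every y ∈ IPS. -/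
/-- Individual Pieces Set. -/
def IPS {m : ℕ} (a : Fin 3 → Fin m → ℝ) : Set (Fin 3 → ℝ) :=
  {v | ∃ X, IsAlloc X ∧ payoff a X = v}

/-! The weighted welfare `∑ i, γ i * a_i(Y)` splits into one term per good `k`, namely the
average of the weights `γ i * a i k` under the column `Y · k`, which is a probability vector.
Such an average never exceeds the largest weight, and `X^γ` attains it for every good since it
only gives good `k` to players maximizing `γ i * a i k`. -/

section ProbabilityVector

variable {ι : Type*} [Fintype ι] {w x y : ι → ℝ}

theorem sum_mul_le_of_forall_le {c : ℝ} (hw : ∀ i, w i ≤ c) (hx : ∀ i, 0 ≤ x i)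
    (hx1 : ∑ i, x i = 1) : ∑ i, w i * x i ≤ c :=
  calc ∑ i, w i * x i ≤ ∑ i, c * x i :=
        Finset.sum_le_sum fun i _ => mul_le_mul_of_nonneg_right (hw i) (hx i)
    _ = c := by rw [← Finset.mul_sum, hx1, mul_one]

theorem sum_mul_eq_of_forall_pos {c : ℝ} (hw : ∀ i, 0 < x i → w i = c)
    (hx : ∀ i, 0 ≤ x i) (hx1 : ∑ i, x i = 1) : ∑ i, w i * x i = c :=
  calc ∑ i, w i * x i = ∑ i, c * x i := by
        refine Finset.sum_congr rfl fun i _ => ?_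
        rcases (hx i).lt_or_eq with hpos | hzero
        · rw [hw i hpos]
        · rw [← hzero, mul_zero, mul_zero]
    _ = c := by rw [← Finset.mul_sum, hx1, mul_one]

theorem exists_pos_of_sum_eq_one (hx1 : ∑ i, x i = 1) : ∃ i, 0 < x i := by
  obtain ⟨i, -, hi⟩ := Finset.exists_lt_of_sum_lt (s := Finset.univ) (f := 0) (g := x)
    (by simp [hx1])
  exact ⟨i, hi⟩

theorem sum_mul_le_sum_mul_of_supported_on_argmax (hy : ∀ i, 0 ≤ y i) (hy1 : ∑ i, y i = 1)
    (hx : ∀ i, 0 ≤ x i) (hx1 : ∑ i, x i = 1) (hmax : ∀ i, 0 < x i → ∀ j, w j ≤ w i) :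
    ∑ i, w i * y i ≤ ∑ i, w i * x i := by
  obtain ⟨i₀, hi₀⟩ := exists_pos_of_sum_eq_one hx1
  have hx_eq : ∑ i, w i * x i = w i₀ :=
    sum_mul_eq_of_forall_pos (fun i hi => le_antisymm (hmax i₀ hi₀ i) (hmax i hi i₀)) hx hx1
  rw [hx_eq]
  exact sum_mul_le_of_forall_le (hmax i₀ hi₀) hy hy1

end ProbabilityVector

theorem sum_mul_payoff_eq {m : ℕ} (a Z : Fin 3 → Fin m → ℝ) (γ : Fin 3 → ℝ) :
    ∑ i, γ i * payoff a Z i = ∑ k, ∑ i, γ i * a i k * Z i k := by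
  rw [Finset.sum_comm]
  simp only [payoff, Finset.mul_sum, mul_assoc]

theorem hyperplane_supports_IPS_general (m : ℕ) (a : Fin 3 → Fin m → ℝ)
    (γ : Fin 3 → ℝ)
    (X : Fin 3 → Fin m → ℝ) (hX : IsAlloc X)
    (hrule : ∀ i k, 0 < X i k → ∀ j, γ j * a j k ≤ γ i * a i k) :
    ∀ y ∈ IPS a, ∑ i, γ i * y i ≤ ∑ i, γ i * payoff a X i := by
  rintro y ⟨Y, hY, rfl⟩
  rw [sum_mul_payoff_eq, sum_mul_payoff_eq]
  exact Finset.sum_le_sum fun k _ =>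
    sum_mul_le_sum_mul_of_supported_on_argmax (fun i => hY.1 i k) (hY.2 k) (fun i => hX.1 i k)
      (hX.2 k) (fun i hi => hrule i k hi)

theorem hyperplane_supports_IPS (m : ℕ) (a : Fin 3 → Fin m → ℝ)
    (ha : ∀ i j, 0 < a i j) (hrow : ∀ i, ∑ j, a i j = 1)
    (γ : Fin 3 → ℝ) (hγpos : ∀ i, 0 < γ i) (hγsum : ∑ i, γ i = 1)
    (X : Fin 3 → Fin m → ℝ) (hX : IsAlloc X)
    (hrule : ∀ i k, 0 < X i k → ∀ j, γ j * a j k ≤ γ i * a i k) :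
    ∀ y ∈ IPS a, ∑ i, γ i * y i ≤ ∑ i, γ i * payoff a X i :=
  hyperplane_supports_IPS_general m a γ X hX hrule
end
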